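/- arXiv:math/0007016 — 5 statements merged into one kernel-verified Lean document; each statement's English description precedes it below -/
import Mathlib

section
/- For a partition λ of n and for any 1 ≤ i < n, the number of standard Young tableaux of shape λ having a descent at position i (i.e., the entry i+1 lies in a strictly lower row than the entry i) is independent of i. -/
open Finset

/-- A standard Young tableau of shape `μ`: a bijective filling of the cells of `μ`
with the numbers `1, ..., μ.card`, strictly increasing along rows and columns. -/
structure SYT (μ : YoungDiagram) where
  entry : ℕ → ℕ → ℕ
  row_strict : ∀ ⦃i j1 j2 : ℕ⦄, j1 < j2 → (i, j2) ∈ μ → entry i j1 < entry i j2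
  col_strict : ∀ ⦃i1 i2 j : ℕ⦄, i1 < i2 → (i2, j) ∈ μ → entry i1 j < entry i2 j
  zeros : ∀ ⦃i j : ℕ⦄, (i, j) ∉ μ → entry i j = 0
  bijOn : Set.BijOn (fun c : ℕ × ℕ => entry c.1 c.2) (μ.cells : Set (ℕ × ℕ))
    (Set.Icc 1 μ.card)

/-- `T` has a descent at `i` iff the entry `i+1` lies in a strictly lower row than `i`. -/
def SYT.DescentAt {μ : YoungDiagram} (T : SYT μ) (i : ℕ) : Prop :=
  ∀ c d : ℕ × ℕ, c ∈ μ → d ∈ μ →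
    T.entry c.1 c.2 = i → T.entry d.1 d.2 = i + 1 → c.1 < d.1


/-!
Write `c(k)` for the content (column minus row) of the cell holding `k`. The cell of `k + 1` lies
either strictly right of and weakly above the cell of `k`, or strictly below and weakly left of it,
so `c(k) ≠ c(k + 1)` and `k` is a descent exactly when `c(k + 1) < c(k)`; moreover
`c(i), c(i + 1), c(i + 2)` are pairwise distinct.

Haiman's elementary dual equivalence exchanges `i` and `i + 1` when `c(i + 2)` is the median of
these three contents, exchanges `i + 1` and `i + 2` when `c(i)` is the median, and does nothing
otherwise. The exchanged entries have contents at distance at least two, so their cells are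
incomparable and the result is again a standard tableau. The map is an involution, and a case check
on the relative order of the three contents shows that it turns descents at `i + 1` into descents
at `i`.
-/

theorem Set.mem_uIoo {α : Type*} [LinearOrder α] {a b x : α} :
    x ∈ Set.uIoo a b ↔ min a b < x ∧ x < max a b :=
  Iff.rfl

theorem swap_succ_lt_swap_succ {k a b : ℕ} (hab : a < b) (h : ¬(a = k ∧ b = k + 1)) :
    Equiv.swap k (k + 1) a < Equiv.swap k (k + 1) b := by
  simp only [Equiv.swap_apply_def]
  split_ifs <;> omega

theorem swap_succ_bijOn_Icc {k n : ℕ} (hk : 1 ≤ k) (hkn : k + 1 ≤ n) :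
    Set.BijOn (Equiv.swap k (k + 1)) (Set.Icc 1 n) (Set.Icc 1 n) :=
  (Equiv.swap k (k + 1)).bijOn fun v => by
    simp only [Set.mem_Icc, Equiv.swap_apply_def]
    split_ifs <;> omega

namespace SYT

variable {μ : YoungDiagram}

@[ext]
theorem ext {T U : SYT μ} (h : T.entry = U.entry) : T = U := by
  cases T; cases U; cases h; rfl

def ofStrictMonoOn (f : ℕ × ℕ → ℕ) (hf : StrictMonoOn f μ.cells)
    (hzero : ∀ c ∉ μ, f c = 0) (hbij : Set.BijOn f μ.cells (Set.Icc 1 μ.card)) : SYT μ where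
  entry i j := f (i, j)
  row_strict _ _ _ hj h := hf (μ.up_left_mem le_rfl hj.le h) h (Prod.mk_lt_mk_iff_right.mpr hj)
  col_strict _ _ _ hi h := hf (μ.up_left_mem hi.le le_rfl h) h (Prod.mk_lt_mk_iff_left.mpr hi)
  zeros _ _ h := hzero _ h
  bijOn := hbij

variable (T : SYT μ)

theorem strictMonoOn_entry : StrictMonoOn (fun c : ℕ × ℕ => T.entry c.1 c.2) μ.cells := by
  rintro ⟨a, b⟩ - ⟨c, d⟩ hy hlt
  have hy : (c, d) ∈ μ := hy
  have hmid : (a, d) ∈ μ := μ.up_left_mem hlt.le.1 le_rfl hy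
  rcases Prod.lt_iff.mp hlt with ⟨hac, hbd⟩ | ⟨hac, hbd⟩
  · calc T.entry a b ≤ T.entry a d := by
          rcases hbd.eq_or_lt with rfl | h
          · exact le_rfl
          · exact (T.row_strict h hmid).le
      _ < T.entry c d := T.col_strict hac hy
  · calc T.entry a b < T.entry a d := T.row_strict hbd hmid
      _ ≤ T.entry c d := by
          rcases hac.eq_or_lt with rfl | h
          · exact le_rfl
          · exact (T.col_strict h hy).le

/-- The cell of `T` containing the entry `k`; junk unless `1 ≤ k ≤ μ.card`. -/
noncomputable def cell (k : ℕ) : ℕ × ℕ :=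
  Function.invFunOn (fun c : ℕ × ℕ => T.entry c.1 c.2) μ.cells k

theorem cell_entry {c : ℕ × ℕ} (hc : c ∈ μ) : T.cell (T.entry c.1 c.2) = c :=
  T.bijOn.invOn_invFunOn.1 ((μ.mem_cells c).mpr hc)

theorem cell_mem {k : ℕ} (hk : k ∈ Set.Icc 1 μ.card) : T.cell k ∈ μ :=
  (μ.mem_cells _).mp (Function.invFunOn_mem (T.bijOn.surjOn hk))

theorem entry_cell {k : ℕ} (hk : k ∈ Set.Icc 1 μ.card) :
    T.entry (T.cell k).1 (T.cell k).2 = k :=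
  Function.invFunOn_eq (T.bijOn.surjOn hk)

theorem entry_lt_entry {x y : ℕ × ℕ} (hy : y ∈ μ) (hxy : x < y) :
    T.entry x.1 x.2 < T.entry y.1 y.2 :=
  T.strictMonoOn_entry (μ.isLowerSet hxy.le hy) hy hxy

theorem entry_le_entry {x y : ℕ × ℕ} (hy : y ∈ μ) (hxy : x ≤ y) :
    T.entry x.1 x.2 ≤ T.entry y.1 y.2 :=
  T.strictMonoOn_entry.monotoneOn (μ.isLowerSet hxy hy) hy hxy

noncomputable def content (k : ℕ) : ℤ := ((T.cell k).2 : ℤ) - (T.cell k).1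

section Consecutive

variable {k : ℕ}

theorem eq_cell_succ_of_lt_of_le (hk : 1 ≤ k) (hkn : k + 1 ≤ μ.card) {z : ℕ × ℕ}
    (hxz : T.cell k < z) (hzy : z ≤ T.cell (k + 1)) : z = T.cell (k + 1) := by
  have hy := T.cell_mem (k := k + 1) ⟨by omega, hkn⟩
  have hz : z ∈ μ := μ.isLowerSet hzy hy
  by_contra hne
  have h₁ := T.entry_lt_entry hz hxz
  have h₂ := T.entry_lt_entry hy (lt_of_le_of_ne hzy hne)
  rw [T.entry_cell ⟨hk, by omega⟩] at h₁
  rw [T.entry_cell ⟨by omega, hkn⟩] at h₂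
  omega

theorem not_cell_succ_le_cell (hk : 1 ≤ k) (hkn : k + 1 ≤ μ.card) :
    ¬ T.cell (k + 1) ≤ T.cell k := by
  intro hle
  have := T.entry_le_entry (T.cell_mem ⟨hk, by omega⟩) hle
  rw [T.entry_cell ⟨hk, by omega⟩, T.entry_cell (k := k + 1) ⟨by omega, hkn⟩] at this
  omega

theorem descentAt_iff (hk : 1 ≤ k) (hkn : k + 1 ≤ μ.card) :
    T.DescentAt k ↔ (T.cell k).1 < (T.cell (k + 1)).1 := by
  refine ⟨fun h => h _ _ (T.cell_mem ⟨hk, by omega⟩) (T.cell_mem ⟨by omega, hkn⟩)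
    (T.entry_cell ⟨hk, by omega⟩) (T.entry_cell ⟨by omega, hkn⟩),
    fun h c d hc hd hck hdk => ?_⟩
  rwa [← T.cell_entry hc, ← T.cell_entry hd, hck, hdk]

theorem content_succ_lt_of_descentAt (hk : 1 ≤ k) (hkn : k + 1 ≤ μ.card) (h : T.DescentAt k) :
    T.content (k + 1) < T.content k := by
  rw [T.descentAt_iff hk hkn] at h
  have hcol : (T.cell (k + 1)).2 ≤ (T.cell k).2 := by
    by_contra! hlt
    have := T.eq_cell_succ_of_lt_of_le hk hkn (z := ((T.cell k).1, (T.cell k).2 + 1))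
      (Prod.mk_lt_mk_iff_right.mpr (Nat.lt_succ_self _)) (Prod.le_def.mpr ⟨h.le, hlt⟩)
    rw [← this] at h
    exact lt_irrefl _ h
  unfold content
  omega

theorem content_lt_content_succ_of_not_descentAt (hk : 1 ≤ k) (hkn : k + 1 ≤ μ.card)
    (h : ¬ T.DescentAt k) : T.content k < T.content (k + 1) := by
  rw [T.descentAt_iff hk hkn, not_lt] at h
  have hcol : (T.cell k).2 < (T.cell (k + 1)).2 := by
    by_contra! hle
    exact T.not_cell_succ_le_cell hk hkn (Prod.le_def.mpr ⟨h, hle⟩)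
  unfold content
  omega

theorem descentAt_iff_content_lt (hk : 1 ≤ k) (hkn : k + 1 ≤ μ.card) :
    T.DescentAt k ↔ T.content (k + 1) < T.content k :=
  ⟨T.content_succ_lt_of_descentAt hk hkn, fun h => by
    by_contra hd
    exact lt_asymm h (T.content_lt_content_succ_of_not_descentAt hk hkn hd)⟩

theorem content_ne_content_succ (hk : 1 ≤ k) (hkn : k + 1 ≤ μ.card) :
    T.content k ≠ T.content (k + 1) := by
  by_cases h : T.DescentAt k
  · exact (T.content_succ_lt_of_descentAt hk hkn h).ne'
  · exact (T.content_lt_content_succ_of_not_descentAt hk hkn h).ne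

theorem content_succ_eq_of_cell_le (hk : 1 ≤ k) (hkn : k + 1 ≤ μ.card)
    (hle : T.cell k ≤ T.cell (k + 1)) :
    T.content (k + 1) = T.content k + 1 ∨ T.content (k + 1) = T.content k - 1 := by
  have hne : T.cell k ≠ T.cell (k + 1) := fun h => T.not_cell_succ_le_cell hk hkn (h ▸ le_rfl)
  obtain ⟨hrow, hcol⟩ := Prod.le_def.mp hle
  unfold content
  rcases hcol.lt_or_eq with hcol | hcol
  · have := T.eq_cell_succ_of_lt_of_le hk hkn (z := ((T.cell k).1, (T.cell k).2 + 1))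
      (Prod.mk_lt_mk_iff_right.mpr (Nat.lt_succ_self _)) (Prod.le_def.mpr ⟨hrow, hcol⟩)
    rw [← this]
    omega
  · have hrow : (T.cell k).1 < (T.cell (k + 1)).1 :=
      hrow.lt_of_ne fun h => hne (Prod.ext h hcol)
    have := T.eq_cell_succ_of_lt_of_le hk hkn (z := ((T.cell k).1 + 1, (T.cell k).2))
      (Prod.mk_lt_mk_iff_left.mpr (Nat.lt_succ_self _)) (Prod.le_def.mpr ⟨hrow, hcol.le⟩)
    rw [← this]
    omega

/-- If `k` and `k + 2` had equal contents, both cells just right of and just below the cell of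
`k` would lie strictly between them and hence both hold `k + 1`. -/
theorem content_ne_content_add_two (hk : 1 ≤ k) (hkn : k + 2 ≤ μ.card) :
    T.content k ≠ T.content (k + 2) := by
  intro h
  have hx := T.cell_mem (k := k) ⟨hk, by omega⟩
  have hz := T.cell_mem (k := k + 2) ⟨by omega, hkn⟩
  have hex := T.entry_cell (k := k) ⟨hk, by omega⟩
  have hez := T.entry_cell (k := k + 2) ⟨by omega, hkn⟩
  have between : ∀ w, T.cell k < w → w < T.cell (k + 2) → w = T.cell (k + 1) := by
    intro w hxw hwz
    have h₁ := T.entry_lt_entry (μ.isLowerSet hwz.le hz) hxw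
    have h₂ := T.entry_lt_entry hz hwz
    rw [← T.cell_entry (μ.isLowerSet hwz.le hz)]
    congr 1
    omega
  simp only [content] at h
  have hlt : (T.cell k).1 < (T.cell (k + 2)).1 ∧ (T.cell k).2 < (T.cell (k + 2)).2 := by
    by_contra hge
    have hle : T.cell (k + 2) ≤ T.cell k := Prod.le_def.mpr ⟨by omega, by omega⟩
    have := T.entry_le_entry hx hle
    omega
  have h₁ := between ((T.cell k).1, (T.cell k).2 + 1)
    (Prod.mk_lt_mk_iff_right.mpr (Nat.lt_succ_self _))
    (Prod.lt_iff.mpr (Or.inl hlt))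
  have h₂ := between ((T.cell k).1 + 1, (T.cell k).2)
    (Prod.mk_lt_mk_iff_left.mpr (Nat.lt_succ_self _))
    (Prod.lt_iff.mpr (Or.inr hlt))
  have := congrArg Prod.fst (h₁.trans h₂.symm)
  simp at this

theorem not_cell_le_cell_succ_of_mem_uIoo (hk : 1 ≤ k) (hkn : k + 1 ≤ μ.card) {c : ℤ}
    (hc : c ∈ Set.uIoo (T.content k) (T.content (k + 1))) : ¬ T.cell k ≤ T.cell (k + 1) := by
  intro hle
  rw [Set.mem_uIoo] at hc
  have := T.content_succ_eq_of_cell_le hk hkn hle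
  omega

end Consecutive

def swapEntries (k : ℕ) (hk : 1 ≤ k) (hkn : k + 1 ≤ μ.card)
    (h : ¬ T.cell k ≤ T.cell (k + 1)) : SYT μ :=
  ofStrictMonoOn (fun c => Equiv.swap k (k + 1) (T.entry c.1 c.2))
    (fun x hx y hy hxy => swap_succ_lt_swap_succ (T.strictMonoOn_entry hx hy hxy)
      fun ⟨hxk, hyk⟩ => h <| by
        subst hxk
        rw [← hyk, T.cell_entry hx, T.cell_entry hy]
        exact hxy.le)
    (fun c hc => by
      rw [T.zeros hc]
      exact Equiv.swap_apply_of_ne_of_ne (by omega) (by omega))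
    ((swap_succ_bijOn_Icc hk hkn).comp T.bijOn)

section SwapEntries

variable {k : ℕ} (hk : 1 ≤ k) (hkn : k + 1 ≤ μ.card) (h : ¬ T.cell k ≤ T.cell (k + 1))

theorem entry_swapEntries (a b : ℕ) :
    (T.swapEntries k hk hkn h).entry a b = Equiv.swap k (k + 1) (T.entry a b) := rfl

theorem cell_swapEntries {j : ℕ} (hj : j ∈ Set.Icc 1 μ.card) :
    (T.swapEntries k hk hkn h).cell j = T.cell (Equiv.swap k (k + 1) j) := by
  have hσj := (swap_succ_bijOn_Icc hk hkn).mapsTo hj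
  calc (T.swapEntries k hk hkn h).cell j
      = (T.swapEntries k hk hkn h).cell ((T.swapEntries k hk hkn h).entry
          (T.cell (Equiv.swap k (k + 1) j)).1 (T.cell (Equiv.swap k (k + 1) j)).2) := by
        rw [entry_swapEntries, T.entry_cell hσj, Equiv.swap_apply_self]
    _ = T.cell (Equiv.swap k (k + 1) j) := cell_entry _ (T.cell_mem hσj)

theorem content_swapEntries {j : ℕ} (hj : j ∈ Set.Icc 1 μ.card) :
    (T.swapEntries k hk hkn h).content j = T.content (Equiv.swap k (k + 1) j) := by
  simp only [content, cell_swapEntries T hk hkn h hj]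

end SwapEntries

open scoped Classical in
/-- Haiman's elementary dual equivalence on the entries `i, i + 1, i + 2`. -/
noncomputable def elementaryDualEquivalence (i : ℕ) (hi : 1 ≤ i) (hin : i + 2 ≤ μ.card)
    (T : SYT μ) : SYT μ :=
  if h : T.content (i + 2) ∈ Set.uIoo (T.content i) (T.content (i + 1)) then
    T.swapEntries i hi (by omega) (T.not_cell_le_cell_succ_of_mem_uIoo hi (by omega) h)
  else if h' : T.content i ∈ Set.uIoo (T.content (i + 1)) (T.content (i + 2)) then
    T.swapEntries (i + 1) (by omega) hin (T.not_cell_le_cell_succ_of_mem_uIoo (by omega) hin h')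
  else T

section ElementaryDualEquivalence

variable {i : ℕ} (hi : 1 ≤ i) (hin : i + 2 ≤ μ.card)

theorem content_swapEntries_left (h : ¬ T.cell i ≤ T.cell (i + 1)) :
    (T.swapEntries i hi (by omega) h).content i = T.content (i + 1) ∧
      (T.swapEntries i hi (by omega) h).content (i + 1) = T.content i ∧
      (T.swapEntries i hi (by omega) h).content (i + 2) = T.content (i + 2) := by
  refine ⟨?_, ?_, ?_⟩ <;> rw [content_swapEntries _ _ _ _ ⟨by omega, by omega⟩]
  · rw [Equiv.swap_apply_left]
  · rw [Equiv.swap_apply_right]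
  · rw [Equiv.swap_apply_of_ne_of_ne (by omega) (by omega)]

theorem content_swapEntries_right (h : ¬ T.cell (i + 1) ≤ T.cell (i + 2)) :
    (T.swapEntries (i + 1) (by omega) hin h).content i = T.content i ∧
      (T.swapEntries (i + 1) (by omega) hin h).content (i + 1) = T.content (i + 2) ∧
      (T.swapEntries (i + 1) (by omega) hin h).content (i + 2) = T.content (i + 1) := by
  refine ⟨?_, ?_, ?_⟩ <;> rw [content_swapEntries _ _ _ _ ⟨by omega, by omega⟩]
  · rw [Equiv.swap_apply_of_ne_of_ne (by omega) (by omega)]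
  · rw [Equiv.swap_apply_left]
  · rw [Equiv.swap_apply_right]

theorem elementaryDualEquivalence_eq_swapEntries_left
    (h : T.content (i + 2) ∈ Set.uIoo (T.content i) (T.content (i + 1))) :
    elementaryDualEquivalence i hi hin T =
      T.swapEntries i hi (by omega) (T.not_cell_le_cell_succ_of_mem_uIoo hi (by omega) h) :=
  dif_pos h

theorem elementaryDualEquivalence_eq_swapEntries_right
    (h : T.content (i + 2) ∉ Set.uIoo (T.content i) (T.content (i + 1)))
    (h' : T.content i ∈ Set.uIoo (T.content (i + 1)) (T.content (i + 2))) :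
    elementaryDualEquivalence i hi hin T =
      T.swapEntries (i + 1) (by omega) hin
        (T.not_cell_le_cell_succ_of_mem_uIoo (by omega) hin h') := by
  rw [elementaryDualEquivalence, dif_neg h, dif_pos h']

theorem elementaryDualEquivalence_eq_self
    (h : T.content (i + 2) ∉ Set.uIoo (T.content i) (T.content (i + 1)))
    (h' : T.content i ∉ Set.uIoo (T.content (i + 1)) (T.content (i + 2))) :
    elementaryDualEquivalence i hi hin T = T := by
  rw [elementaryDualEquivalence, dif_neg h, dif_neg h']

theorem elementaryDualEquivalence_involutive :
    Function.Involutive (elementaryDualEquivalence (μ := μ) i hi hin) := by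
  intro T
  by_cases h : T.content (i + 2) ∈ Set.uIoo (T.content i) (T.content (i + 1))
  · set U := T.swapEntries i hi (by omega) (T.not_cell_le_cell_succ_of_mem_uIoo hi (by omega) h)
    obtain ⟨ha, hb, hc⟩ := T.content_swapEntries_left hi hin
      (T.not_cell_le_cell_succ_of_mem_uIoo hi (by omega) h)
    have hU : U.content (i + 2) ∈ Set.uIoo (U.content i) (U.content (i + 1)) := by
      rwa [ha, hb, hc, Set.uIoo_comm]
    rw [elementaryDualEquivalence_eq_swapEntries_left T hi hin h,
      elementaryDualEquivalence_eq_swapEntries_left U hi hin hU]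
    ext a b
    simp only [entry_swapEntries, U, Equiv.swap_apply_self]
  by_cases h' : T.content i ∈ Set.uIoo (T.content (i + 1)) (T.content (i + 2))
  · set U := T.swapEntries (i + 1) (by omega) hin
      (T.not_cell_le_cell_succ_of_mem_uIoo (by omega) hin h')
    obtain ⟨ha, hb, hc⟩ := T.content_swapEntries_right hi hin
      (T.not_cell_le_cell_succ_of_mem_uIoo (by omega) hin h')
    have hU : U.content (i + 2) ∉ Set.uIoo (U.content i) (U.content (i + 1)) := by
      rw [ha, hb, hc]
      simp only [Set.mem_uIoo] at h' ⊢
      omega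
    have hU' : U.content i ∈ Set.uIoo (U.content (i + 1)) (U.content (i + 2)) := by
      rwa [ha, hb, hc, Set.uIoo_comm]
    rw [elementaryDualEquivalence_eq_swapEntries_right T hi hin h h',
      elementaryDualEquivalence_eq_swapEntries_right U hi hin hU hU']
    ext a b
    simp only [entry_swapEntries, U, Equiv.swap_apply_self]
  · rw [elementaryDualEquivalence_eq_self T hi hin h h',
      elementaryDualEquivalence_eq_self T hi hin h h']

theorem descentAt_elementaryDualEquivalence (T : SYT μ) :
    (elementaryDualEquivalence i hi hin T).DescentAt i ↔ T.DescentAt (i + 1) := by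
  rw [descentAt_iff_content_lt _ hi (by omega),
    T.descentAt_iff_content_lt (k := i + 1) (by omega) hin, show i + 1 + 1 = i + 2 from rfl]
  have hab := T.content_ne_content_succ hi (by omega)
  have hbc : T.content (i + 1) ≠ T.content (i + 2) :=
    T.content_ne_content_succ (k := i + 1) (by omega) hin
  have hac := T.content_ne_content_add_two hi hin
  by_cases h : T.content (i + 2) ∈ Set.uIoo (T.content i) (T.content (i + 1))
  · obtain ⟨ha, hb, -⟩ := T.content_swapEntries_left hi hin
      (T.not_cell_le_cell_succ_of_mem_uIoo hi (by omega) h)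
    rw [elementaryDualEquivalence_eq_swapEntries_left T hi hin h, ha, hb]
    rw [Set.mem_uIoo] at h
    omega
  by_cases h' : T.content i ∈ Set.uIoo (T.content (i + 1)) (T.content (i + 2))
  · obtain ⟨ha, hb, -⟩ := T.content_swapEntries_right hi hin
      (T.not_cell_le_cell_succ_of_mem_uIoo (by omega) hin h')
    rw [elementaryDualEquivalence_eq_swapEntries_right T hi hin h h', ha, hb]
    rw [Set.mem_uIoo] at h'
    omega
  · rw [elementaryDualEquivalence_eq_self T hi hin h h']
    rw [Set.mem_uIoo] at h h'
    omega

end ElementaryDualEquivalence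

theorem card_descentAt_succ {i : ℕ} (hi : 1 ≤ i) (hin : i + 2 ≤ μ.card) :
    Nat.card {T : SYT μ // T.DescentAt (i + 1)} = Nat.card {T : SYT μ // T.DescentAt i} :=
  Nat.card_congr <| ((elementaryDualEquivalence_involutive hi hin).toPerm _).subtypeEquiv
    fun T => (descentAt_elementaryDualEquivalence hi hin T).symm

theorem card_descentAt_eq_card_descentAt_one {k : ℕ} (hk : 1 ≤ k) (hkn : k < μ.card) :
    Nat.card {T : SYT μ // T.DescentAt k} = Nat.card {T : SYT μ // T.DescentAt 1} := by
  induction k, hk using Nat.le_induction with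
  | base => rfl
  | succ k hk ih => rw [card_descentAt_succ hk (by omega), ih (by omega)]

end SYT

/-- The number of standard Young tableaux of shape `μ` with a descent at `i`
(for `1 ≤ i < n`) is independent of `i`. -/
theorem descent_count_independent (n : ℕ) (μ : YoungDiagram) (hn : μ.card = n)
    (i i' : ℕ) (hi1 : 1 ≤ i) (hi2 : i < n) (hi'1 : 1 ≤ i') (hi'2 : i' < n) :
    Nat.card {T : SYT μ // T.DescentAt i} = Nat.card {T : SYT μ // T.DescentAt i'} := by
  subst hn
  rw [SYT.card_descentAt_eq_card_descentAt_one hi1 hi2,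
    SYT.card_descentAt_eq_card_descentAt_one hi'1 hi'2]
end

section
/- Let λ be a partition of n ≥ 2 with conjugate λ'. Then (1/2)·[1 + Σᵢ λ'ᵢ(λ'ᵢ−1)/(n(n−1)) − Σᵢ λᵢ(λᵢ−1)/(n(n−1))] = Σ_{i≥j} λ'ᵢ(λ'ⱼ−1)/(n(n−1)), where the right-hand sum is over all pairs of indices i ≥ j of parts of λ'. -/
/-!
Counting the cells `(i, j)` of `λ` row by row and column by column gives
`Σᵢ λᵢ(λᵢ-1)/2 = Σ_{cells} j = Σⱼ j λ'ⱼ`, while `2 Σ_{i≥j} λ'ᵢλ'ⱼ = (Σ λ'ᵢ)² + Σ λ'ᵢ²` with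
`Σ λ'ᵢ = n`. After clearing the denominator `n(n-1)`, both sides of the identity are the same
linear combination of `n²`, `n`, `Σ λ'ᵢ²` and `Σⱼ j λ'ⱼ`.
-/

open Finset

namespace Finset

variable {R : Type*} [CommRing R]

theorem two_mul_sum_range_natCast (n : ℕ) : 2 * ∑ i ∈ range n, (i : R) = n * (n - 1) := by
  induction n with
  | zero => simp
  | succ n ih =>
    rw [sum_range_succ, mul_add, ih]
    push_cast
    ring

theorem two_mul_sum_range_sum_range_succ_mul (f : ℕ → R) (n : ℕ) :
    2 * ∑ i ∈ range n, ∑ j ∈ range (i + 1), f i * f j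
      = (∑ i ∈ range n, f i) ^ 2 + ∑ i ∈ range n, f i ^ 2 := by
  induction n with
  | zero => simp
  | succ n ih =>
    rw [sum_range_succ, sum_range_succ, sum_range_succ f, sum_range_succ (fun i => f i ^ 2),
      ← mul_sum]
    linear_combination ih

end Finset

namespace YoungDiagram

variable (μ : YoungDiagram) {N : ℕ}

theorem colLen_zero_le_card : μ.colLen 0 ≤ μ.card :=
  μ.colLen_eq_card ▸ card_le_card (filter_subset _ _)

theorem rowLen_zero_le_card : μ.rowLen 0 ≤ μ.card :=
  μ.rowLen_eq_card ▸ card_le_card (filter_subset _ _)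

section Sum

variable {M : Type*} [AddCommMonoid M]

theorem sum_cells_eq_sum_range_rowLen (hN : μ.colLen 0 ≤ N) (f : ℕ × ℕ → M) :
    ∑ c ∈ μ.cells, f c = ∑ i ∈ range N, ∑ j ∈ range (μ.rowLen i), f (i, j) := by
  have hmaps : ∀ c ∈ μ.cells, c.1 ∈ range N := fun c hc =>
    mem_range.2 <| ((mem_iff_lt_colLen.1 hc).trans_le
      (μ.colLen_anti 0 c.2 c.2.zero_le)).trans_le hN
  rw [← sum_fiberwise_of_maps_to hmaps]
  refine sum_congr rfl fun i _ => ?_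
  rw [← row, row_eq_prod, sum_product, sum_singleton]

theorem sum_cells_eq_sum_range_colLen (hN : μ.rowLen 0 ≤ N) (f : ℕ × ℕ → M) :
    ∑ c ∈ μ.cells, f c = ∑ j ∈ range N, ∑ i ∈ range (μ.colLen j), f (i, j) := by
  have hmaps : ∀ c ∈ μ.cells, c.2 ∈ range N := fun c hc =>
    mem_range.2 <| ((mem_iff_lt_rowLen.1 hc).trans_le
      (μ.rowLen_anti 0 c.1 c.1.zero_le)).trans_le hN
  rw [← sum_fiberwise_of_maps_to hmaps]
  refine sum_congr rfl fun j _ => ?_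
  rw [← col, col_eq_prod, sum_product_right, sum_singleton]

end Sum

theorem sum_range_rowLen (hN : μ.colLen 0 ≤ N) : ∑ i ∈ range N, μ.rowLen i = μ.card := by
  rw [YoungDiagram.card, card_eq_sum_ones, μ.sum_cells_eq_sum_range_rowLen hN]
  simp

theorem sum_range_colLen (hN : μ.rowLen 0 ≤ N) : ∑ j ∈ range N, μ.colLen j = μ.card := by
  rw [YoungDiagram.card, card_eq_sum_ones, μ.sum_cells_eq_sum_range_colLen hN]
  simp

theorem sum_range_rowLen_mul_rowLen_sub_one {R : Type*} [CommRing R]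
    (hcol : μ.colLen 0 ≤ N) (hrow : μ.rowLen 0 ≤ N) :
    ∑ i ∈ range N, (μ.rowLen i : R) * (μ.rowLen i - 1)
      = 2 * ∑ j ∈ range N, (j : R) * μ.colLen j := by
  calc ∑ i ∈ range N, (μ.rowLen i : R) * (μ.rowLen i - 1)
      = 2 * ∑ c ∈ μ.cells, (c.2 : R) := by
        rw [μ.sum_cells_eq_sum_range_rowLen hcol, mul_sum]
        exact sum_congr rfl fun i _ => (two_mul_sum_range_natCast _).symm
    _ = 2 * ∑ j ∈ range N, (j : R) * μ.colLen j := by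
        simp [μ.sum_cells_eq_sum_range_colLen hrow, mul_comm]

theorem two_mul_sum_range_sum_range_succ_colLen_mul_colLen_sub_one {R : Type*} [CommRing R]
    (hN : μ.card ≤ N) :
    2 * ∑ i ∈ range N, ∑ j ∈ range (i + 1), (μ.colLen i : R) * (μ.colLen j - 1)
      = μ.card * (μ.card - 1) + ∑ i ∈ range N, (μ.colLen i : R) * (μ.colLen i - 1)
        - ∑ i ∈ range N, (μ.rowLen i : R) * (μ.rowLen i - 1) := by
  have hcol := μ.colLen_zero_le_card.trans hN
  have hrow := μ.rowLen_zero_le_card.trans hN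
  have hsum : ∑ i ∈ range N, (μ.colLen i : R) = μ.card := by
    rw [← Nat.cast_sum, μ.sum_range_colLen hrow]
  have hshift : ∑ i ∈ range N, ((i + 1 : ℕ) : R) * μ.colLen i
      = ∑ i ∈ range N, (i : R) * μ.colLen i + μ.card := by
    simp only [Nat.cast_succ, add_mul, one_mul, sum_add_distrib, hsum]
  have hpairs := two_mul_sum_range_sum_range_succ_mul (fun i => (μ.colLen i : R)) N
  rw [μ.sum_range_rowLen_mul_rowLen_sub_one hcol hrow]
  simp only [mul_sub, mul_one, sum_sub_distrib, sum_const, card_range, nsmul_eq_mul, ← sq]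
  linear_combination (1 + μ.card + ∑ i ∈ range N, (μ.colLen i : R)) * hsum + hpairs - 2 * hshift

end YoungDiagram

/-- `(1/2)[1 + Σ λ'ᵢ(λ'ᵢ−1)/(n(n−1)) − Σ λᵢ(λᵢ−1)/(n(n−1))] = Σ_{i≥j} λ'ᵢ(λ'ⱼ−1)/(n(n−1))`,
where `λᵢ = μ.rowLen i` and `λ'ᵢ = μ.colLen i` for the Young diagram `μ` of `λ`. -/
theorem c_conj_formula (μ : YoungDiagram) (n : ℕ) (hn : μ.card = n) (h2 : 2 ≤ n) :
    (1 / 2 : ℝ) *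
        (1 + (∑ i ∈ Finset.range n, (μ.colLen i : ℝ) * ((μ.colLen i : ℝ) - 1)) /
            (n * ((n : ℝ) - 1))
          - (∑ i ∈ Finset.range n, (μ.rowLen i : ℝ) * ((μ.rowLen i : ℝ) - 1)) /
            (n * ((n : ℝ) - 1)))
      = ∑ i ∈ Finset.range n, ∑ j ∈ Finset.range (i + 1),
          (μ.colLen i : ℝ) * ((μ.colLen j : ℝ) - 1) / (n * ((n : ℝ) - 1)) := by
  have key := μ.two_mul_sum_range_sum_range_succ_colLen_mul_colLen_sub_one (R := ℝ) hn.le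
  rw [hn] at key
  have hn0 : (n : ℝ) ≠ 0 := by norm_cast; omega
  have hn1 : (n : ℝ) - 1 ≠ 0 := sub_ne_zero.2 (by norm_cast; omega)
  simp only [← sum_div]
  field_simp
  linear_combination -key
end

section
/- For a partition λ of n ≥ 4, one has e_λ ≤ d_λ ≤ c_λ ≤ 1, where c_λ = Σ_{i≥j} λᵢ(λⱼ−1)/(n(n−1)), d_λ = Σ_{i≥j≥k, λₖ>2} λᵢ(λⱼ−1)(λₖ−2)/(n(n−1)(n−2)), and e_λ = Σ_{i≥j≥k≥l, λₗ>3} λᵢ(λⱼ−1)(λₖ−2)(λₗ−3)/(n(n−1)(n−2)(n−3)). -/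
open Finset

/-- `c_ν = Σ_{i≥j} ν_i (ν_j − 1) / (n(n−1))`, for the parts function `p` of a partition of `n`. -/
noncomputable def cS (p : ℕ → ℕ) (n : ℕ) : ℝ :=
  ∑ i ∈ Finset.range n, ∑ j ∈ Finset.range (i + 1),
    (p i : ℝ) * ((p j : ℝ) - 1) / (n * ((n : ℝ) - 1))

/-- `d_ν = Σ_{i≥j≥k, ν_k>2} ν_i (ν_j − 1)(ν_k − 2) / (n(n−1)(n−2))`. -/
noncomputable def dS (p : ℕ → ℕ) (n : ℕ) : ℝ :=
  ∑ i ∈ Finset.range n, ∑ j ∈ Finset.range (i + 1),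
    ∑ k ∈ (Finset.range (j + 1)).filter (fun k => 2 < p k),
      (p i : ℝ) * ((p j : ℝ) - 1) * ((p k : ℝ) - 2) / (n * ((n : ℝ) - 1) * ((n : ℝ) - 2))

/-- `e_ν = Σ_{i≥j≥k≥l, ν_k>2, ν_l>3} ν_i (ν_j−1)(ν_k−2)(ν_l−3) / (n(n−1)(n−2)(n−3))`. -/
noncomputable def eS (p : ℕ → ℕ) (n : ℕ) : ℝ :=
  ∑ i ∈ Finset.range n, ∑ j ∈ Finset.range (i + 1),
    ∑ k ∈ (Finset.range (j + 1)).filter (fun k => 2 < p k),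
      ∑ l ∈ (Finset.range (k + 1)).filter (fun l => 3 < p l),
        (p i : ℝ) * ((p j : ℝ) - 1) * ((p k : ℝ) - 2) * ((p l : ℝ) - 3) /
          (n * ((n : ℝ) - 1) * ((n : ℝ) - 2) * ((n : ℝ) - 3))
lemma sum_rowLen_le_card (μ : YoungDiagram) (n : ℕ) :
    ∑ i ∈ Finset.range n, μ.rowLen i ≤ μ.card := by
  classical
  have hdis : ∀ x ∈ Finset.range n, ∀ y ∈ Finset.range n, x ≠ y →
      Disjoint (μ.row x) (μ.row y) := by
    intro x _ y _ hxy
    rw [Finset.disjoint_left]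
    intro c hcx hcy
    rw [YoungDiagram.mem_row_iff] at hcx hcy
    exact hxy (hcx.2 ▸ hcy.2 ▸ rfl)
  calc ∑ i ∈ Finset.range n, μ.rowLen i
      = ((Finset.range n).biUnion μ.row).card := by
        rw [Finset.card_biUnion hdis]
        exact Finset.sum_congr rfl fun i _ => μ.rowLen_eq_card
    _ ≤ μ.card := by
        apply Finset.card_le_card
        intro c hc
        simp only [Finset.mem_biUnion] at hc
        obtain ⟨i, _, hci⟩ := hc
        exact (YoungDiagram.mem_row_iff.1 hci).1

lemma sum_filter_sub_le (p : ℕ → ℕ) (n : ℕ)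
    (hp : ∑ i ∈ Finset.range n, (p i : ℝ) ≤ n)
    (P : ℕ → Prop) [DecidablePred P] (r : ℕ) (hr : (r : ℝ) ≤ n)
    (hP : ∀ k, P k → r ≤ p k) (m : ℕ) (hm : m ≤ n) :
    ∑ k ∈ (Finset.range m).filter P, ((p k : ℝ) - r) ≤ (n : ℝ) - r := by
  classical
  have hsub : (Finset.range m).filter P ⊆ (Finset.range n).filter P :=
    Finset.filter_subset_filter _ (Finset.range_subset_range.2 hm)
  have h1 : ∑ k ∈ (Finset.range m).filter P, ((p k : ℝ) - r)
      ≤ ∑ k ∈ (Finset.range n).filter P, ((p k : ℝ) - r) := by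
    apply Finset.sum_le_sum_of_subset_of_nonneg hsub
    intro k hk _
    have h := hP k (Finset.mem_filter.1 hk).2
    have h' : (r : ℝ) ≤ p k := by exact_mod_cast h
    linarith
  refine h1.trans ?_
  rcases Finset.eq_empty_or_nonempty ((Finset.range n).filter P) with h | h
  · simp [h]; exact_mod_cast hr
  · have hcard : 1 ≤ ((Finset.range n).filter P).card := Finset.card_pos.2 h
    have h2 : ∑ k ∈ (Finset.range n).filter P, (p k : ℝ) ≤ n := by
      refine le_trans (Finset.sum_le_sum_of_subset_of_nonneg
        (Finset.filter_subset _ _) ?_) hp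
      intros; positivity
    rw [Finset.sum_sub_distrib]
    simp only [Finset.sum_const, nsmul_eq_mul]
    have hc' : (1 : ℝ) ≤ ((Finset.range n).filter P).card := by exact_mod_cast hcard
    nlinarith [Nat.cast_nonneg (α := ℝ) r]

/-- For a partition `λ` of `n ≥ 4` one has `e_λ ≤ d_λ ≤ c_λ ≤ 1`
(with `λᵢ = μ.rowLen i`, `n = μ.card`). -/
theorem e_le_d_le_c_le_one (μ : YoungDiagram) (n : ℕ) (hn : μ.card = n) (h4 : 4 ≤ n) :
    eS μ.rowLen n ≤ dS μ.rowLen n ∧ dS μ.rowLen n ≤ cS μ.rowLen n ∧ cS μ.rowLen n ≤ 1 := by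
  classical
  set p := μ.rowLen with hpdef
  have hanti : ∀ {a b : ℕ}, a ≤ b → p b ≤ p a := fun h => μ.rowLen_anti _ _ h
  have hsumN : ∑ i ∈ Finset.range n, p i ≤ n := hn ▸ sum_rowLen_le_card μ n
  have hsum : ∑ i ∈ Finset.range n, (p i : ℝ) ≤ n := by exact_mod_cast hsumN
  have h4' : (4 : ℝ) ≤ n := by exact_mod_cast h4
  have hn0 : (0 : ℝ) < n := by linarith
  have hn1 : (0 : ℝ) < (n : ℝ) - 1 := by linarith
  have hn2 : (0 : ℝ) < (n : ℝ) - 2 := by linarith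
  have hn3 : (0 : ℝ) < (n : ℝ) - 3 := by linarith
  have prod2 : ∀ {i j : ℕ}, j ≤ i → 0 ≤ (p i : ℝ) * ((p j : ℝ) - 1) := by
    intro i j hji
    rcases Nat.eq_zero_or_pos (p i) with h | h
    · simp [h]
    · have h1 : 1 ≤ p j := le_trans h (hanti hji)
      have h1' : (1 : ℝ) ≤ p j := by exact_mod_cast h1
      have h2 : (0 : ℝ) ≤ p i := by positivity
      nlinarith
  have prod3 : ∀ {i j k : ℕ}, j ≤ i → k ≤ j → 2 < p k →
      0 ≤ (p i : ℝ) * ((p j : ℝ) - 1) * ((p k : ℝ) - 2) := by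
    intro i j k hji hkj hk
    have hk' : (2 : ℝ) < p k := by exact_mod_cast hk
    exact mul_nonneg (prod2 hji) (by linarith)
  refine ⟨?_, ?_, ?_⟩
  · -- e ≤ d
    unfold eS dS
    refine Finset.sum_le_sum fun i hi => Finset.sum_le_sum fun j hj =>
      Finset.sum_le_sum fun k hk => ?_
    have hji : j ≤ i := Finset.mem_range_succ_iff.1 hj
    have hkj : k ≤ j := Finset.mem_range_succ_iff.1 ((Finset.mem_filter.1 hk).1)
    have hpk : 2 < p k := (Finset.mem_filter.1 hk).2
    have hi' : i < n := Finset.mem_range.1 hi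
    set B : ℝ := (p i : ℝ) * ((p j : ℝ) - 1) * ((p k : ℝ) - 2) with hB
    have hB0 : 0 ≤ B := prod3 hji hkj hpk
    have heq : ∑ l ∈ (Finset.range (k + 1)).filter (fun l => 3 < p l),
        B * ((p l : ℝ) - 3) / ((n : ℝ) * ((n : ℝ) - 1) * ((n : ℝ) - 2) * ((n : ℝ) - 3))
        = B * (∑ l ∈ (Finset.range (k + 1)).filter (fun l => 3 < p l), ((p l : ℝ) - 3)) /
            ((n : ℝ) * ((n : ℝ) - 1) * ((n : ℝ) - 2) * ((n : ℝ) - 3)) := by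
      rw [← Finset.sum_div, ← Finset.mul_sum]
    rw [heq]
    have hS : ∑ l ∈ (Finset.range (k + 1)).filter (fun l => 3 < p l), ((p l : ℝ) - 3)
        ≤ (n : ℝ) - 3 := by
      have := sum_filter_sub_le p n hsum (fun l => 3 < p l) 3 (by push_cast; linarith)
        (fun l hl => le_of_lt hl) (k + 1)
        (by omega)
      push_cast at this
      exact this
    calc B * (∑ l ∈ (Finset.range (k + 1)).filter (fun l => 3 < p l), ((p l : ℝ) - 3)) /
          ((n : ℝ) * ((n : ℝ) - 1) * ((n : ℝ) - 2) * ((n : ℝ) - 3))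
        ≤ B * ((n : ℝ) - 3) /
          ((n : ℝ) * ((n : ℝ) - 1) * ((n : ℝ) - 2) * ((n : ℝ) - 3)) := by
          gcongr
      _ = B / ((n : ℝ) * ((n : ℝ) - 1) * ((n : ℝ) - 2)) := by
          field_simp
  · -- d ≤ c
    unfold dS cS
    refine Finset.sum_le_sum fun i hi => Finset.sum_le_sum fun j hj => ?_
    have hji : j ≤ i := Finset.mem_range_succ_iff.1 hj
    have hi' : i < n := Finset.mem_range.1 hi
    set A : ℝ := (p i : ℝ) * ((p j : ℝ) - 1) with hA
    have hA0 : 0 ≤ A := prod2 hji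
    have heq : ∑ k ∈ (Finset.range (j + 1)).filter (fun k => 2 < p k),
        A * ((p k : ℝ) - 2) / ((n : ℝ) * ((n : ℝ) - 1) * ((n : ℝ) - 2))
        = A * (∑ k ∈ (Finset.range (j + 1)).filter (fun k => 2 < p k), ((p k : ℝ) - 2)) /
            ((n : ℝ) * ((n : ℝ) - 1) * ((n : ℝ) - 2)) := by
      rw [← Finset.sum_div, ← Finset.mul_sum]
    rw [heq]
    have hS : ∑ k ∈ (Finset.range (j + 1)).filter (fun k => 2 < p k), ((p k : ℝ) - 2)
        ≤ (n : ℝ) - 2 := by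
      have := sum_filter_sub_le p n hsum (fun k => 2 < p k) 2 (by push_cast; linarith)
        (fun k hk => le_of_lt hk) (j + 1) (by omega)
      push_cast at this
      exact this
    calc A * (∑ k ∈ (Finset.range (j + 1)).filter (fun k => 2 < p k), ((p k : ℝ) - 2)) /
          ((n : ℝ) * ((n : ℝ) - 1) * ((n : ℝ) - 2))
        ≤ A * ((n : ℝ) - 2) / ((n : ℝ) * ((n : ℝ) - 1) * ((n : ℝ) - 2)) := by
          gcongr
      _ = A / ((n : ℝ) * ((n : ℝ) - 1)) := by
          field_simp
  · -- c ≤ 1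
    unfold cS
    have hfac : ∑ i ∈ Finset.range n, ∑ j ∈ Finset.range (i + 1),
        (p i : ℝ) * ((p j : ℝ) - 1) / ((n : ℝ) * ((n : ℝ) - 1))
        = (∑ i ∈ Finset.range n, ∑ j ∈ Finset.range (i + 1),
            (p i : ℝ) * ((p j : ℝ) - 1)) / ((n : ℝ) * ((n : ℝ) - 1)) := by
      rw [Finset.sum_div]
      exact Finset.sum_congr rfl fun i _ => by rw [Finset.sum_div]
    rw [hfac, div_le_one (by positivity)]
    -- swap the order of summation
    have hswap : ∑ i ∈ Finset.range n, ∑ j ∈ Finset.range (i + 1),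
        (p i : ℝ) * ((p j : ℝ) - 1)
        = ∑ j ∈ Finset.range n, ∑ i ∈ Finset.Ico j n, (p i : ℝ) * ((p j : ℝ) - 1) := by
      have := Finset.sum_Ico_Ico_comm 0 n (fun i j => (p j : ℝ) * ((p i : ℝ) - 1))
      simp only [Finset.range_eq_Ico]
      exact this.symm
    rw [hswap]
    have hstep : ∀ j ∈ Finset.range n,
        ∑ i ∈ Finset.Ico j n, (p i : ℝ) * ((p j : ℝ) - 1)
        ≤ if 0 < p j then (n : ℝ) * ((p j : ℝ) - 1) else 0 := by
      intro j _
      rcases Nat.eq_zero_or_pos (p j) with h | h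
      · simp only [h, lt_self_iff_false, if_false]
        apply le_of_eq
        apply Finset.sum_eq_zero
        intro i hi
        have hji : j ≤ i := (Finset.mem_Ico.1 hi).1
        have : p i = 0 := Nat.le_zero.1 (h ▸ hanti hji)
        simp [this]
      · simp only [h, if_true]
        rw [← Finset.sum_mul]
        have hT : ∑ i ∈ Finset.Ico j n, (p i : ℝ) ≤ n := by
          refine le_trans (Finset.sum_le_sum_of_subset_of_nonneg ?_ ?_) hsum
          · rw [Finset.range_eq_Ico]; exact Finset.Ico_subset_Ico (Nat.zero_le _) le_rfl
          · intros; positivity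
        have h1 : (1 : ℝ) ≤ p j := by exact_mod_cast h
        exact mul_le_mul_of_nonneg_right hT (by linarith)
    calc ∑ j ∈ Finset.range n, ∑ i ∈ Finset.Ico j n, (p i : ℝ) * ((p j : ℝ) - 1)
        ≤ ∑ j ∈ Finset.range n, (if 0 < p j then (n : ℝ) * ((p j : ℝ) - 1) else 0) :=
          Finset.sum_le_sum hstep
      _ = (n : ℝ) * ∑ j ∈ (Finset.range n).filter (fun j => 0 < p j), ((p j : ℝ) - 1) := by
          rw [Finset.mul_sum, Finset.sum_filter]
      _ ≤ (n : ℝ) * ((n : ℝ) - 1) := by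
          have := sum_filter_sub_le p n hsum (fun j => 0 < p j) 1 (by push_cast; linarith)
            (fun j hj => hj) n le_rfl
          push_cast at this
          exact mul_le_mul_of_nonneg_left this (by positivity)
end

section
/- Let λ be a partition of n ≥ 2, q = λ₁/n, and c_{λ'} = Σ_{i≥j} λ'ᵢ(λ'ⱼ−1)/(n(n−1)). If q ≥ 1/2, then c_{λ'} ≥ (n/(n−1))·q(1−q) > q(1−q) (assuming q < 1). -/
open Finset

/-- Triangle sum swap: `∑_{i<m} ∑_{j≤i} f j = ∑_{j<m} (m-j) f j`. -/
lemma tri_sum_swap (m : ℕ) (f : ℕ → ℕ) :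
    ∑ i ∈ range m, ∑ j ∈ range (i + 1), f j = ∑ j ∈ range m, (m - j) * f j := by
  induction m with
  | zero => simp
  | succ m ih =>
    rw [Finset.sum_range_succ (f := fun i => ∑ j ∈ range (i + 1), f j), ih,
      Finset.sum_range_succ (f := fun j => (m + 1 - j) * f j)]
    have h1 : ∑ j ∈ range m, (m + 1 - j) * f j
        = ∑ j ∈ range m, ((m - j) * f j + f j) := by
      apply Finset.sum_congr rfl
      intro j hj
      rw [Finset.mem_range] at hj
      have h : m + 1 - j = (m - j) + 1 := by omega
      rw [h, add_mul, one_mul]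
    have h2 : m + 1 - m = 1 := by omega
    rw [h2, one_mul, h1, Finset.sum_add_distrib, Finset.sum_range_succ f]
    omega

/-- Key combinatorial inequality for an antitone sequence `d`. -/
lemma key_ineq (m : ℕ) (d : ℕ → ℕ) (hanti : ∀ ⦃j i⦄, j ≤ i → d i ≤ d j) :
    m * (∑ i ∈ range m, d i) ≤ ∑ i ∈ range m, ∑ j ∈ range (i + 1), (d i + 1) * d j := by
  have h1 : ∑ i ∈ range m, i * d i ≤ ∑ i ∈ range m, ∑ j ∈ range i, d i * d j := by
    apply Finset.sum_le_sum
    intro i _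
    have hterm : ∀ j ∈ range i, d i ≤ d i * d j := by
      intro j hj
      rw [Finset.mem_range] at hj
      rcases Nat.eq_zero_or_pos (d i) with h0 | h0
      · simp [h0]
      · have hdj : 1 ≤ d j := le_trans h0 (hanti hj.le)
        calc d i = d i * 1 := (mul_one _).symm
          _ ≤ d i * d j := Nat.mul_le_mul_left _ hdj
    calc i * d i = ∑ _j ∈ range i, d i := by
          rw [Finset.sum_const, Finset.card_range, smul_eq_mul]
      _ ≤ ∑ j ∈ range i, d i * d j := Finset.sum_le_sum hterm
  have h2 : ∑ i ∈ range m, (m - i) * d i = ∑ i ∈ range m, ∑ j ∈ range (i + 1), d j :=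
    (tri_sum_swap m d).symm
  have h3 : ∑ i ∈ range m, ∑ j ∈ range (i + 1), (d i + 1) * d j
      = ∑ i ∈ range m, ((∑ j ∈ range i, d i * d j) + d i * d i + ∑ j ∈ range (i + 1), d j) := by
    apply Finset.sum_congr rfl
    intro i _
    have h : ∑ j ∈ range (i + 1), (d i + 1) * d j
        = ∑ j ∈ range (i + 1), (d i * d j + d j) := by
      apply Finset.sum_congr rfl; intro j _; ring
    rw [h, Finset.sum_add_distrib, Finset.sum_range_succ (fun j => d i * d j)]
  have h4 : m * (∑ i ∈ range m, d i) = ∑ i ∈ range m, (i * d i + (m - i) * d i) := by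
    rw [Finset.mul_sum]
    apply Finset.sum_congr rfl
    intro i hi
    rw [Finset.mem_range] at hi
    have h : i + (m - i) = m := by omega
    rw [← add_mul, h]
  rw [h4, Finset.sum_add_distrib, h3, Finset.sum_add_distrib, Finset.sum_add_distrib, h2]
  omega

/-- If `q = λ₁/n ≥ 1/2` (and `q < 1`), then
`c_{λ'} = Σ_{i≥j} λ'ᵢ(λ'ⱼ−1)/(n(n−1)) ≥ (n/(n−1))·q(1−q) > q(1−q)`. -/
theorem c_conj_lower_bound (μ : YoungDiagram) (n : ℕ) (hn : μ.card = n) (h2 : 2 ≤ n)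
    (q : ℝ) (hq : q = (μ.rowLen 0 : ℝ) / n) (hq2 : 1 / 2 ≤ q) (hq1 : q < 1) :
    ((n : ℝ) / ((n : ℝ) - 1)) * (q * (1 - q)) ≤
        ∑ i ∈ Finset.range n, ∑ j ∈ Finset.range (i + 1),
          (μ.colLen i : ℝ) * ((μ.colLen j : ℝ) - 1) / (n * ((n : ℝ) - 1)) ∧
      q * (1 - q) < ((n : ℝ) / ((n : ℝ) - 1)) * (q * (1 - q)) := by
  set m := μ.rowLen 0 with hm
  have hnR : (0 : ℝ) < n := by
    have : (0 : ℕ) < n := by omega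
    exact_mod_cast this
  have hmn : m < n := by
    have h : (m : ℝ) / n < 1 := hq ▸ hq1
    have h' : (m : ℝ) < n := (div_lt_one hnR).mp h
    exact_mod_cast h'
  have hm1 : 1 ≤ m := by
    by_contra h0
    have hm0 : m = 0 := by omega
    rw [hq, hm0] at hq2
    norm_num at hq2
  -- column length facts
  have hc0 : ∀ j, m ≤ j → μ.colLen j = 0 := by
    intro j hj
    by_contra h
    have hpos : 0 < μ.colLen j := Nat.pos_of_ne_zero h
    have hmem : (0, j) ∈ μ := YoungDiagram.mem_iff_lt_colLen.mpr hpos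
    have := YoungDiagram.mem_iff_lt_rowLen.mp hmem
    omega
  have hcpos : ∀ j, j < m → 1 ≤ μ.colLen j := by
    intro j hj
    have hmem : (0, j) ∈ μ := YoungDiagram.mem_iff_lt_rowLen.mpr hj
    exact YoungDiagram.mem_iff_lt_colLen.mp hmem
  -- total sum of column lengths is n
  have hsum : ∑ j ∈ range n, μ.colLen j = n := by
    have hmemn : ∀ c ∈ μ.cells, c.snd ∈ range n := by
      intro c hc
      obtain ⟨a, b⟩ := c
      rw [YoungDiagram.mem_cells] at hc
      have hb : b < μ.rowLen a := YoungDiagram.mem_iff_lt_rowLen.mp hc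
      have h0 : μ.rowLen a ≤ m := μ.rowLen_anti 0 a (Nat.zero_le a)
      rw [Finset.mem_range]
      omega
    calc ∑ j ∈ range n, μ.colLen j
        = ∑ j ∈ range n, (μ.cells.filter fun c => c.snd = j).card := by
          apply Finset.sum_congr rfl
          intro j _
          rw [μ.colLen_eq_card]
          rfl
      _ = μ.cells.card := (Finset.card_eq_sum_card_fiberwise hmemn).symm
      _ = n := hn
  set d : ℕ → ℕ := fun j => μ.colLen j - 1 with hd
  have hdanti : ∀ ⦃j i⦄, j ≤ i → d i ≤ d j := fun j i h =>
    Nat.sub_le_sub_right (μ.colLen_anti j i h) 1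
  have hsum_m : ∑ j ∈ range m, μ.colLen j = n := by
    rw [← hsum]
    apply Finset.sum_subset (Finset.range_subset_range.mpr hmn.le)
    intro x hx hx'
    rw [Finset.mem_range] at hx hx'
    exact hc0 x (by omega)
  have hdsum : ∑ i ∈ range m, d i = n - m := by
    have h : ∑ i ∈ range m, (d i + 1) = ∑ i ∈ range m, μ.colLen i := by
      apply Finset.sum_congr rfl
      intro i hi
      rw [Finset.mem_range] at hi
      have := hcpos i hi
      simp only [hd]
      omega
    rw [Finset.sum_add_distrib, Finset.sum_const, Finset.card_range, smul_eq_mul, mul_one,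
      hsum_m] at h
    omega
  have hkey : m * (n - m) ≤ ∑ i ∈ range m, ∑ j ∈ range (i + 1), (d i + 1) * d j := by
    rw [← hdsum]
    exact key_ineq m d hdanti
  -- identify the real sum with the natural-number sum
  have hreal : ∑ i ∈ range n, ∑ j ∈ range (i + 1), (μ.colLen i : ℝ) * ((μ.colLen j : ℝ) - 1)
      = ((∑ i ∈ range m, ∑ j ∈ range (i + 1), (d i + 1) * d j : ℕ) : ℝ) := by
    rw [← Finset.sum_subset (Finset.range_subset_range.mpr hmn.le) ?hz]
    · push_cast
      apply Finset.sum_congr rfl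
      intro i hi
      rw [Finset.mem_range] at hi
      apply Finset.sum_congr rfl
      intro j hj
      rw [Finset.mem_range] at hj
      have hi1 := hcpos i hi
      have hj1 := hcpos j (by omega)
      have e1 : μ.colLen i = d i + 1 := by simp only [hd]; omega
      have e2 : μ.colLen j = d j + 1 := by simp only [hd]; omega
      rw [e1, e2]
      push_cast
      ring
    case hz =>
      intro x hx hx'
      rw [Finset.mem_range] at hx hx'
      have : μ.colLen x = 0 := hc0 x (by omega)
      simp [this]
  have hNge : ((m : ℝ) * ((n : ℝ) - m)) ≤
      ∑ i ∈ range n, ∑ j ∈ range (i + 1), (μ.colLen i : ℝ) * ((μ.colLen j : ℝ) - 1) := by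
    rw [hreal]
    have h := hkey
    have h' : ((m * (n - m) : ℕ) : ℝ) ≤
        ((∑ i ∈ range m, ∑ j ∈ range (i + 1), (d i + 1) * d j : ℕ) : ℝ) := by
      exact_mod_cast h
    calc (m : ℝ) * ((n : ℝ) - m) = ((m * (n - m) : ℕ) : ℝ) := by
          push_cast [Nat.cast_sub hmn.le]
          ring
      _ ≤ _ := h'
  have hn1 : (0 : ℝ) < (n : ℝ) - 1 := by
    have : (1 : ℕ) < n := by omega
    have : (1 : ℝ) < n := by exact_mod_cast this
    linarith
  constructor
  · have hLHS : ((n : ℝ) / ((n : ℝ) - 1)) * (q * (1 - q))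
        = ((m : ℝ) * ((n : ℝ) - m)) / ((n : ℝ) * ((n : ℝ) - 1)) := by
      rw [hq]
      field_simp
    have hRHS : ∑ i ∈ Finset.range n, ∑ j ∈ Finset.range (i + 1),
          (μ.colLen i : ℝ) * ((μ.colLen j : ℝ) - 1) / (n * ((n : ℝ) - 1))
        = (∑ i ∈ range n, ∑ j ∈ range (i + 1),
          (μ.colLen i : ℝ) * ((μ.colLen j : ℝ) - 1)) / ((n : ℝ) * ((n : ℝ) - 1)) := by
      rw [Finset.sum_div]
      apply Finset.sum_congr rfl
      intro i _
      rw [Finset.sum_div]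
    rw [hLHS, hRHS]
    exact div_le_div_of_nonneg_right hNge (by positivity)
  · have hq0 : 0 < q := lt_of_lt_of_le (by norm_num) hq2
    have hqq : 0 < q * (1 - q) := mul_pos hq0 (by linarith)
    have h1n : 1 < (n : ℝ) / ((n : ℝ) - 1) := by
      rw [lt_div_iff₀ hn1]
      linarith
    exact (lt_mul_iff_one_lt_left hqq).mpr h1n
end

section
/- For any partition λ of n with removed-first-row shape μ (so μᵢ = λ_{i+1}), the identity d_λ = q₁q₂ + q₂·(r(r−1)/(n(n−1)))·c_μ + (r(r−1)(r−2)/(n(n−1)(n−2)))·d_μ holds, where r = n − λ₁, qᵢ = (nq−i)/(n−i) with q = λ₁/n, c_μ = Σ_{i≥j} μᵢ(μⱼ−1)/(r(r−1)), and d is as defined, whenever n ≥ 3 and r ≥ 3. -/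
open Finset

/-
For an antitone parts function `p` (here `p = λ`, and `μᵢ = p (i + 1)`) the filter `p k > 2` in `d` can be dropped:
every term it removes has `p k ∈ {0, 1, 2}`, and `k ≤ j ≤ i` then forces one of the factors
`p i`, `p j - 1`, `p k - 2` to vanish. The numerator of `d_λ` is then the plain sum
`Σ_{i ≥ j ≥ k} p i (p j - 1)(p k - 2)`, which splits by the smallest index `k`: triples avoiding
row `0` give the numerator of `d_μ`, triples with only `k = 0` give `(λ₁ - 2)` times the numerator
of `c_μ`, and triples with `j = k = 0` give `(λ₁ - 1)(λ₁ - 2) Σ p i = (λ₁ - 1)(λ₁ - 2) n`.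
The sums may be cut at `r + 1` rows because the hook of the cell `(0, 0)` gives `λ₁ + λ'₁ ≤ n + 1`.
-/

namespace YoungDiagram

variable (μ : YoungDiagram)

theorem rowLen_eq_zero_of_colLen_le {i : ℕ} (hi : μ.colLen 0 ≤ i) : μ.rowLen i = 0 := by
  by_contra h
  have : (i, 0) ∈ μ := mem_iff_lt_rowLen.2 (Nat.pos_of_ne_zero h)
  exact absurd (mem_iff_lt_colLen.1 this) (not_lt.2 hi)

theorem rowLen_zero_pos (h : 0 < μ.card) : 0 < μ.rowLen 0 := by
  obtain ⟨c, hc⟩ := card_pos.1 h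
  exact mem_iff_lt_rowLen.1 (μ.up_left_mem (Nat.zero_le c.1) (Nat.zero_le c.2) ((mem_cells c).1 hc))

theorem sum_range_rowLen_eq_card {N : ℕ} (hN : μ.colLen 0 ≤ N) :
    ∑ i ∈ range N, μ.rowLen i = μ.card := by
  have hrow : ∀ c ∈ μ.cells, c.1 ∈ range N := fun c hc => by
    have : (c.1, 0) ∈ μ := μ.up_left_mem le_rfl (Nat.zero_le _) ((mem_cells c).1 hc)
    exact mem_range.2 ((mem_iff_lt_colLen.1 this).trans_le hN)
  rw [YoungDiagram.card, card_eq_sum_card_fiberwise hrow]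
  exact sum_congr rfl fun i _ => μ.rowLen_eq_card

theorem rowLen_zero_add_colLen_zero_le : μ.rowLen 0 + μ.colLen 0 ≤ μ.card + 1 := by
  have hsub : μ.row 0 ∪ μ.col 0 ⊆ μ.cells := union_subset (filter_subset _ _) (filter_subset _ _)
  have hinter : μ.row 0 ∩ μ.col 0 ⊆ {(0, 0)} := fun c hc => by
    simp only [mem_inter, mem_row_iff, mem_col_iff] at hc
    simp [Prod.ext_iff, hc.1.2, hc.2.2]
  have := card_union_add_card_inter (μ.row 0) (μ.col 0)
  rw [YoungDiagram.card, rowLen_eq_card, colLen_eq_card]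
  have := card_le_card hsub
  have := (card_le_card hinter).trans_eq (card_singleton _)
  omega

end YoungDiagram

noncomputable def cSNum (p : ℕ → ℕ) (m : ℕ) : ℝ :=
  ∑ i ∈ range m, (p i : ℝ) * ∑ j ∈ range (i + 1), ((p j : ℝ) - 1)

noncomputable def dSNum (p : ℕ → ℕ) (m : ℕ) : ℝ :=
  ∑ i ∈ range m, (p i : ℝ) * ∑ j ∈ range (i + 1), ((p j : ℝ) - 1) *
    ∑ k ∈ range (j + 1), ((p k : ℝ) - 2)

section

variable (p : ℕ → ℕ)

theorem cS_eq_cSNum_div (m : ℕ) : cS p m = cSNum p m / (m * ((m : ℝ) - 1)) := by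
  simp only [cS, cSNum, mul_sum, sum_div]

theorem dSNum_term_eq_zero_of_le_two (hp : Antitone p) {i j k : ℕ} (hji : j ≤ i) (hkj : k ≤ j)
    (hk : p k ≤ 2) : (p i : ℝ) * ((p j : ℝ) - 1) * ((p k : ℝ) - 2) = 0 := by
  have := hp hji
  have := hp hkj
  rcases (by omega : p i = 0 ∨ p j = 1 ∨ p k = 2) with h | h | h <;> simp [h]

theorem dS_eq_dSNum_div (hp : Antitone p) (m : ℕ) :
    dS p m = dSNum p m / (m * ((m : ℝ) - 1) * ((m : ℝ) - 2)) := by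
  simp only [dS, dSNum, mul_sum, sum_div, sum_filter]
  refine sum_congr rfl fun i _ => sum_congr rfl fun j hj => sum_congr rfl fun k hk => ?_
  split_ifs with h
  · ring
  · rw [← mul_assoc, dSNum_term_eq_zero_of_le_two p hp (Nat.lt_succ_iff.1 (mem_range.1 hj))
      (Nat.lt_succ_iff.1 (mem_range.1 hk)) (not_lt.1 h), zero_div]

theorem dSNum_eq_of_forall_le_eq_zero {N M : ℕ} (hNM : N ≤ M) (hp : ∀ i, N ≤ i → p i = 0) :
    dSNum p M = dSNum p N :=
  (sum_subset (range_subset_range.2 hNM) fun i _ hi => by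
    simp [hp i (not_lt.1 (mt mem_range.2 hi))]).symm

theorem dSNum_succ (m : ℕ) :
    dSNum p (m + 1) = dSNum (fun i => p (i + 1)) m + ((p 0 : ℝ) - 2) * cSNum (fun i => p (i + 1)) m
      + ((p 0 : ℝ) - 1) * ((p 0 : ℝ) - 2) * ∑ i ∈ range (m + 1), (p i : ℝ) := by
  have hinner : ∀ i, ∑ j ∈ range (i + 1 + 1), ((p j : ℝ) - 1) * ∑ k ∈ range (j + 1), ((p k : ℝ) - 2)
      = ∑ j ∈ range (i + 1), ((p (j + 1) : ℝ) - 1) * ∑ k ∈ range (j + 1), ((p (k + 1) : ℝ) - 2)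
        + (∑ j ∈ range (i + 1), ((p (j + 1) : ℝ) - 1)) * ((p 0 : ℝ) - 2)
        + ((p 0 : ℝ) - 1) * ((p 0 : ℝ) - 2) := by
    intro i
    simp only [sum_range_succ' _ (i + 1), sum_range_succ' (fun k => (p k : ℝ) - 2), mul_add,
      sum_add_distrib, sum_mul, sum_range_zero, mul_zero, zero_add]
  rw [dSNum, sum_range_succ', sum_range_succ' (fun i => (p i : ℝ))]
  simp only [hinner, sum_range_one, zero_add]
  rw [dSNum, cSNum, mul_sum, mul_add, mul_sum, ← add_assoc, ← sum_add_distrib, ← sum_add_distrib]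
  congr 1
  · exact sum_congr rfl fun x _ => by ring
  · ring

end

theorem d_first_row_decomposition_general (lam : YoungDiagram) (n r : ℕ)
    (hn : lam.card = n) (hrdef : r = n - lam.rowLen 0) (hr : 3 ≤ r)
    (q q1 q2 : ℝ) (hq : q = (lam.rowLen 0 : ℝ) / n)
    (hq1 : q1 = ((n : ℝ) * q - 1) / ((n : ℝ) - 1))
    (hq2 : q2 = ((n : ℝ) * q - 2) / ((n : ℝ) - 2)) :
    dS lam.rowLen n =
      q1 * q2 +
        q2 * (((r : ℝ) * ((r : ℝ) - 1)) / ((n : ℝ) * ((n : ℝ) - 1))) *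
          cS (fun i => lam.rowLen (i + 1)) r +
        (((r : ℝ) * ((r : ℝ) - 1) * ((r : ℝ) - 2)) /
            ((n : ℝ) * ((n : ℝ) - 1) * ((n : ℝ) - 2))) *
          dS (fun i => lam.rowLen (i + 1)) r := by
  have hp : Antitone lam.rowLen := lam.rowLen_anti
  have hμ : Antitone fun i => lam.rowLen (i + 1) := fun i j h => lam.rowLen_anti _ _ (by omega)
  have hrow : 0 < lam.rowLen 0 := lam.rowLen_zero_pos (by omega)
  have hcol : lam.colLen 0 ≤ r + 1 := by
    have := lam.rowLen_zero_add_colLen_zero_le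
    omega
  have hsum : ∑ i ∈ range (r + 1), (lam.rowLen i : ℝ) = n := by
    exact_mod_cast (lam.sum_range_rowLen_eq_card hcol).trans hn
  have hnum : dSNum lam.rowLen n = dSNum (fun i => lam.rowLen (i + 1)) r
      + ((lam.rowLen 0 : ℝ) - 2) * cSNum (fun i => lam.rowLen (i + 1)) r
      + ((lam.rowLen 0 : ℝ) - 1) * ((lam.rowLen 0 : ℝ) - 2) * n := by
    rw [dSNum_eq_of_forall_le_eq_zero _ (by omega : r + 1 ≤ n)
      fun i hi => lam.rowLen_eq_zero_of_colLen_le (hcol.trans hi), dSNum_succ, hsum]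
  have hn' : (3 : ℝ) ≤ n := by exact_mod_cast (by omega : 3 ≤ n)
  have hr' : (3 : ℝ) ≤ r := by exact_mod_cast hr
  have : (n : ℝ) - 1 ≠ 0 := by linarith
  have : (n : ℝ) - 2 ≠ 0 := by linarith
  have : (r : ℝ) - 1 ≠ 0 := by linarith
  have : (r : ℝ) - 2 ≠ 0 := by linarith
  rw [dS_eq_dSNum_div _ hp, dS_eq_dSNum_div _ hμ, cS_eq_cSNum_div, hnum, hq1, hq2, hq]
  field_simp
  ring

/-- Decomposition of `d_λ` according to the first row: with `μᵢ = λ_{i+1}` the shape with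
the first row removed, `r = n − λ₁`, `q = λ₁/n` and `qᵢ = (nq−i)/(n−i)`,
`d_λ = q₁q₂ + q₂·(r(r−1)/(n(n−1)))·c_μ + (r(r−1)(r−2)/(n(n−1)(n−2)))·d_μ`. -/
theorem d_first_row_decomposition (lam : YoungDiagram) (n r : ℕ)
    (hn : lam.card = n) (h3 : 3 ≤ n) (hrdef : r = n - lam.rowLen 0) (hr : 3 ≤ r)
    (q q1 q2 : ℝ) (hq : q = (lam.rowLen 0 : ℝ) / n)
    (hq1 : q1 = ((n : ℝ) * q - 1) / ((n : ℝ) - 1))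
    (hq2 : q2 = ((n : ℝ) * q - 2) / ((n : ℝ) - 2)) :
    dS lam.rowLen n =
      q1 * q2 +
        q2 * (((r : ℝ) * ((r : ℝ) - 1)) / ((n : ℝ) * ((n : ℝ) - 1))) *
          cS (fun i => lam.rowLen (i + 1)) r +
        (((r : ℝ) * ((r : ℝ) - 1) * ((r : ℝ) - 2)) /
            ((n : ℝ) * ((n : ℝ) - 1) * ((n : ℝ) - 2))) *
          dS (fun i => lam.rowLen (i + 1)) r :=
  d_first_row_decomposition_general lam n r hn hrdef hr q q1 q2 hq hq1 hq2
end
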